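/- If a grid walk p₁ crosses rectangle R' top-to-bottom inside R' and a grid walk p₂ crosses R' left-to-right inside R', then restricting to the crossing segments, there exist indices i, j with p₁(i) = p₂(j) (a common vertex), and moreover this common vertex can be chosen so that it lies on both walks' crossing segments simultaneously; in particular the set of rows visited by p₁ includes all rows of R' and the set of columns visited by p₂ includes all columns of R'. -/

import Mathlib

def manh (a b : ℤ × ℤ) : ℤ := |a.1 - b.1| + |a.2 - b.2|

def inRect (x₁ x₂ y₁ y₂ : ℤ) (a : ℤ × ℤ) : Prop :=
  x₁ ≤ a.1 ∧ a.1 ≤ x₂ ∧ y₁ ≤ a.2 ∧ a.2 ≤ y₂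

/-!
If the walks never met, `(i, j) ↦ p i - q j` would map the grid rectangle `[0, n] × [0, m]`
into `ℤ² ∖ {0}` with unit steps along both axes. Count with sign the crossings of the ray
`{(t, 1/2) : t < 0}` along the image of the boundary of the rectangle. The image of each
elementary square is a small parallelogram avoiding the origin and contributes nothing, so by
a discrete Stokes argument the count is zero. On the other hand the four sides of the boundary
are mapped into the half planes `x ≥ 0`, `y ≤ 0`, `x ≤ 0` and `y ≥ 0`, where the crossing count
has explicit potentials, and these add up to one: the boundary loop winds once around the origin.
The claims about rows and columns are the discrete intermediate value theorem.
-/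

open Finset

lemma manh_sub_right (a b c : ℤ × ℤ) : manh (a - c) (b - c) = manh a b := by
  simp [manh]

lemma manh_sub_left (a b c : ℤ × ℤ) : manh (c - a) (c - b) = manh a b := by
  simp only [manh, Prod.fst_sub, Prod.snd_sub, sub_sub_sub_cancel_left]
  rw [abs_sub_comm b.1, abs_sub_comm b.2]

lemma manh_self (a : ℤ × ℤ) : manh a a = 0 := by
  simp [manh]

lemma manh_le_one_of_step {a b : ℤ × ℤ} (h : a = b ∨ manh a b = 1) : manh a b ≤ 1 := by
  rcases h with rfl | h
  · exact (manh_self a).trans_le zero_le_one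
  · exact h.le

lemma manh_le_one_iff {a b : ℤ × ℤ} :
    manh a b ≤ 1 ↔ (a.1 = b.1 ∧ b.2 - 1 ≤ a.2 ∧ a.2 ≤ b.2 + 1) ∨
      (a.2 = b.2 ∧ b.1 - 1 ≤ a.1 ∧ a.1 ≤ b.1 + 1) := by
  unfold manh
  grind

theorem exists_apply_eq_of_le_add_one {f : ℕ → ℤ} (hf : ∀ k, f (k + 1) ≤ f k + 1) {N : ℕ}
    {y : ℤ} (h0 : f 0 ≤ y) (hN : y ≤ f N) : ∃ k ≤ N, f k = y := by
  induction N with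
  | zero => exact ⟨0, le_rfl, le_antisymm h0 hN⟩
  | succ N ih =>
    by_cases h : y ≤ f N
    · obtain ⟨k, hk, hfk⟩ := ih h
      exact ⟨k, hk.trans N.le_succ, hfk⟩
    · exact ⟨N + 1, le_rfl, by linarith [hf N]⟩

theorem Finset.sum_row_add_eq_add_sum_row_succ {M : Type*} [AddCommMonoid M] {h v : ℕ → ℕ → M}
    (hsq : ∀ i j, h i j + v (i + 1) j = v i j + h i (j + 1)) (n j : ℕ) :
    ∑ i ∈ range n, h i j + v n j = v 0 j + ∑ i ∈ range n, h i (j + 1) := by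
  induction n with
  | zero => simp
  | succ n ih =>
    rw [sum_range_succ, sum_range_succ, add_assoc, hsq, ← add_assoc, ih, add_assoc]

theorem Finset.sum_bottom_add_sum_right_eq_sum_left_add_sum_top {M : Type*} [AddCommMonoid M]
    {h v : ℕ → ℕ → M} (hsq : ∀ i j, h i j + v (i + 1) j = v i j + h i (j + 1)) (n m : ℕ) :
    ∑ i ∈ range n, h i 0 + ∑ j ∈ range m, v n j = ∑ j ∈ range m, v 0 j + ∑ i ∈ range n, h i m := by
  induction m with
  | zero => simp
  | succ m ih =>
    rw [sum_range_succ, sum_range_succ, ← add_assoc, ih, add_assoc,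
      sum_row_add_eq_add_sum_row_succ hsq, ← add_assoc]

def leftPotential (a : ℤ × ℤ) : ℤ := if 0 < a.2 then 1 else 0

def upperPotential (a : ℤ × ℤ) : ℤ := if a.2 = 0 ∧ a.1 < 0 then -1 else 0

/-- For a step `a → b` with `manh a b ≤ 1`, the signed number of crossings of the ray
`{(t, 1/2) : t < 0}`. -/
def rayCrossing (a b : ℤ × ℤ) : ℤ :=
  if a.1 < 0 ∧ b.1 < 0 then leftPotential b - leftPotential a else 0

lemma rayCrossing_of_fst_nonneg {a : ℤ × ℤ} (b : ℤ × ℤ) (ha : 0 ≤ a.1) : rayCrossing a b = 0 :=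
  if_neg fun h => h.1.not_ge ha

lemma rayCrossing_of_snd_eq {a b : ℤ × ℤ} (h : a.2 = b.2) : rayCrossing a b = 0 := by
  simp [rayCrossing, leftPotential, h]

lemma rayCrossing_of_snd_nonpos {a b : ℤ × ℤ} (ha : a.2 ≤ 0) (hb : b.2 ≤ 0) :
    rayCrossing a b = 0 := by
  unfold rayCrossing leftPotential
  split_ifs <;> omega

lemma rayCrossing_eq_leftPotential_sub {a b : ℤ × ℤ} (hab : manh b a ≤ 1) (ha : a.1 ≤ 0)
    (hb : b.1 ≤ 0) (ha0 : a ≠ 0) (hb0 : b ≠ 0) :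
    rayCrossing a b = leftPotential b - leftPotential a := by
  obtain ⟨a₁, a₂⟩ := a
  obtain ⟨b₁, b₂⟩ := b
  simp only [ne_eq, Prod.ext_iff, Prod.fst_zero, Prod.snd_zero] at ha0 hb0
  rw [manh_le_one_iff] at hab
  unfold rayCrossing leftPotential
  dsimp only at *
  split_ifs <;> omega

lemma rayCrossing_eq_upperPotential_sub {a b : ℤ × ℤ} (hab : manh b a ≤ 1) (ha : 0 ≤ a.2)
    (hb : 0 ≤ b.2) (ha0 : a ≠ 0) (hb0 : b ≠ 0) :
    rayCrossing a b = upperPotential b - upperPotential a := by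
  obtain ⟨a₁, a₂⟩ := a
  obtain ⟨b₁, b₂⟩ := b
  simp only [ne_eq, Prod.ext_iff, Prod.fst_zero, Prod.snd_zero] at ha0 hb0
  rw [manh_le_one_iff] at hab
  unfold rayCrossing leftPotential upperPotential
  dsimp only at *
  split_ifs <;> omega

lemma leftPotential_sub_upperPotential {z : ℤ × ℤ} (hx : z.1 ≤ 0) (hy : 0 ≤ z.2) (hz : z ≠ 0) :
    leftPotential z - upperPotential z = 1 := by
  obtain ⟨x, y⟩ := z
  simp only [ne_eq, Prod.ext_iff, Prod.fst_zero, Prod.snd_zero] at hz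
  unfold leftPotential upperPotential
  dsimp only at *
  split_ifs <;> omega

lemma rayCrossing_add_rayCrossing_comm {a b c d : ℤ × ℤ} (hab : manh b a ≤ 1)
    (had : manh d a ≤ 1) (hpar : a + c = b + d) (ha : a ≠ 0) (hb : b ≠ 0) (hc : c ≠ 0)
    (hd : d ≠ 0) : rayCrossing a b + rayCrossing b c = rayCrossing a d + rayCrossing d c := by
  have h₁ : a.1 + c.1 = b.1 + d.1 := congrArg Prod.fst hpar
  have h₂ : a.2 + c.2 = b.2 + d.2 := congrArg Prod.snd hpar
  have hab' := manh_le_one_iff.mp hab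
  have had' := manh_le_one_iff.mp had
  by_cases hright : 0 ≤ a.1 ∧ 0 ≤ b.1 ∧ 0 ≤ d.1
  · simp only [rayCrossing_of_fst_nonneg _ hright.1, rayCrossing_of_fst_nonneg _ hright.2.1,
      rayCrossing_of_fst_nonneg _ hright.2.2]
  by_cases hleft : a.1 ≤ 0 ∧ b.1 ≤ 0 ∧ c.1 ≤ 0 ∧ d.1 ≤ 0
  · have hcb : manh c b ≤ 1 := manh_le_one_iff.mpr (by omega)
    have hcd : manh c d ≤ 1 := manh_le_one_iff.mpr (by omega)
    rw [rayCrossing_eq_leftPotential_sub hab hleft.1 hleft.2.1 ha hb,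
      rayCrossing_eq_leftPotential_sub hcb hleft.2.1 hleft.2.2.1 hb hc,
      rayCrossing_eq_leftPotential_sub had hleft.1 hleft.2.2.2 ha hd,
      rayCrossing_eq_leftPotential_sub hcd hleft.2.2.2 hleft.2.2.1 hd hc]
    abel
  -- The corners straddle the line `x = 0`, which forces both sides of the parallelogram to
  -- be horizontal.
  have hab₂ : a.2 = b.2 := by omega
  have hbc₂ : b.2 = c.2 := by omega
  have had₂ : a.2 = d.2 := by omega
  have hdc₂ : d.2 = c.2 := by omega
  rw [rayCrossing_of_snd_eq hab₂, rayCrossing_of_snd_eq hbc₂, rayCrossing_of_snd_eq had₂,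
    rayCrossing_of_snd_eq hdc₂]

theorem exists_eq_of_crossing {P Q : ℕ → ℤ × ℤ} (hP : ∀ k, manh (P (k + 1)) (P k) ≤ 1)
    (hQ : ∀ l, manh (Q (l + 1)) (Q l) ≤ 1) {n m : ℕ}
    (hPx : ∀ k, (Q 0).1 ≤ (P k).1 ∧ (P k).1 ≤ (Q m).1)
    (hQy : ∀ l, (P 0).2 ≤ (Q l).2 ∧ (Q l).2 ≤ (P n).2) : ∃ k l, P k = Q l := by
  by_contra! hPQ
  set F : ℕ → ℕ → ℤ × ℤ := fun i j => P i - Q j with hF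
  have hF0 i j : F i j ≠ 0 := sub_ne_zero.mpr (hPQ i j)
  have hFi i j : manh (F (i + 1) j) (F i j) ≤ 1 := by rw [manh_sub_right]; exact hP i
  have hFj i j : manh (F i (j + 1)) (F i j) ≤ 1 := by rw [manh_sub_left]; exact hQ j
  have stokes := sum_bottom_add_sum_right_eq_sum_left_add_sum_top
    (h := fun i j => rayCrossing (F i j) (F (i + 1) j))
    (v := fun i j => rayCrossing (F i j) (F i (j + 1)))
    (fun i j => rayCrossing_add_rayCrossing_comm (hFi i j) (hFj i j) (by simp only [hF]; abel)
      (hF0 _ _) (hF0 _ _) (hF0 _ _) (hF0 _ _)) n m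
  have bottom : ∑ i ∈ range n, rayCrossing (F i 0) (F (i + 1) 0) = 0 :=
    sum_eq_zero fun i _ => rayCrossing_of_fst_nonneg _ (by simp [hF, (hPx i).1])
  have left : ∑ j ∈ range m, rayCrossing (F 0 j) (F 0 (j + 1)) = 0 :=
    sum_eq_zero fun j _ =>
      rayCrossing_of_snd_nonpos (by simp [hF, (hQy j).1]) (by simp [hF, (hQy (j + 1)).1])
  have top : ∑ i ∈ range n, rayCrossing (F i m) (F (i + 1) m) = leftPotential (F n m) := by
    rw [sum_congr rfl fun i _ => rayCrossing_eq_leftPotential_sub (hFi i m)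
      (by simp [hF, (hPx i).2]) (by simp [hF, (hPx (i + 1)).2]) (hF0 _ _) (hF0 _ _),
      sum_range_sub (fun i => leftPotential (F i m))]
    simp [leftPotential, hF, (hQy m).1]
  have right : ∑ j ∈ range m, rayCrossing (F n j) (F n (j + 1)) = upperPotential (F n m) := by
    rw [sum_congr rfl fun j _ => rayCrossing_eq_upperPotential_sub (hFj n j)
      (by simp [hF, (hQy j).2]) (by simp [hF, (hQy (j + 1)).2]) (hF0 _ _) (hF0 _ _),
      sum_range_sub (fun j => upperPotential (F n j))]
    simp [upperPotential, hF, (hPx n).1]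
  have winding := leftPotential_sub_upperPotential (z := F n m) (by simp [hF, (hPx n).2])
    (by simp [hF, (hQy m).2]) (hF0 n m)
  rw [bottom, left, top, right] at stokes
  omega

namespace Fin

lemma clamp_zero (m : ℕ) : clamp 0 m = 0 := by
  ext; simp

lemma rel_clamp_succ_clamp {α : Type*} {R : α → α → Prop} (hR : ∀ a, R a a) {n : ℕ}
    {p : Fin (n + 1) → α} (hp : ∀ i : Fin n, R (p i.succ) (p i.castSucc)) (k : ℕ) :
    R (p (clamp (k + 1) n)) (p (clamp k n)) := by
  by_cases hk : k < n
  · have hsucc : clamp (k + 1) n = (⟨k, hk⟩ : Fin n).succ := by ext; simp; omega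
    have hcast : clamp k n = (⟨k, hk⟩ : Fin n).castSucc := by ext; simp; omega
    rw [hsucc, hcast]
    exact hp _
  · rw [show clamp (k + 1) n = clamp k n by ext; simp; omega]
    exact hR _

theorem exists_apply_eq_of_le_add_one {n : ℕ} {f : Fin (n + 1) → ℤ}
    (hf : ∀ i : Fin n, f i.succ ≤ f i.castSucc + 1) {y : ℤ} (h0 : f 0 ≤ y)
    (hn : y ≤ f (last n)) : ∃ i, f i = y := by
  obtain ⟨k, -, hk⟩ := _root_.exists_apply_eq_of_le_add_one (f := fun k => f (clamp k n))
    (rel_clamp_succ_clamp (R := fun a b => a ≤ b + 1) (fun a => (lt_add_one a).le) hf) (N := n)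
    (by simpa [clamp_zero] using h0) (by simpa [clamp_eq_last] using hn)
  exact ⟨_, hk⟩

theorem exists_eq_of_crossing {n m : ℕ} {p : Fin (n + 1) → ℤ × ℤ} {q : Fin (m + 1) → ℤ × ℤ}
    (hp : ∀ i : Fin n, manh (p i.succ) (p i.castSucc) ≤ 1)
    (hq : ∀ j : Fin m, manh (q j.succ) (q j.castSucc) ≤ 1)
    (hpx : ∀ i, (q 0).1 ≤ (p i).1 ∧ (p i).1 ≤ (q (last m)).1)
    (hqy : ∀ j, (p 0).2 ≤ (q j).2 ∧ (q j).2 ≤ (p (last n)).2) : ∃ i j, p i = q j := by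
  have hR (a : ℤ × ℤ) : manh a a ≤ 1 := (manh_self a).trans_le zero_le_one
  obtain ⟨k, l, hkl⟩ := _root_.exists_eq_of_crossing (P := fun k => p (clamp k n))
    (Q := fun l => q (clamp l m)) (rel_clamp_succ_clamp (R := fun a b => manh a b ≤ 1) hR hp)
    (rel_clamp_succ_clamp (R := fun a b => manh a b ≤ 1) hR hq) (n := n) (m := m)
    (by simpa [clamp_zero, clamp_eq_last] using fun k => hpx (clamp k n))
    (by simpa [clamp_zero, clamp_eq_last] using fun l => hqy (clamp l m))
  exact ⟨_, _, hkl⟩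

end Fin

theorem crossing_segments_intersect_general (x₁ x₂ y₁ y₂ : ℤ)
    (n m : ℕ) (p : Fin (n + 1) → ℤ × ℤ) (q : Fin (m + 1) → ℤ × ℤ)
    (hpstep : ∀ i : Fin n, p i.succ = p i.castSucc ∨ manh (p i.succ) (p i.castSucc) = 1)
    (hqstep : ∀ j : Fin m, q j.succ = q j.castSucc ∨ manh (q j.succ) (q j.castSucc) = 1)
    (hp0 : (p 0).2 = y₁) (hpn : (p (Fin.last n)).2 = y₂)
    (hpin : ∀ i, inRect x₁ x₂ y₁ y₂ (p i))
    (hq0 : (q 0).1 = x₁) (hqm : (q (Fin.last m)).1 = x₂)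
    (hqin : ∀ j, inRect x₁ x₂ y₁ y₂ (q j)) :
    (∃ i j, p i = q j ∧ inRect x₁ x₂ y₁ y₂ (p i)) ∧
    (∀ y, y₁ ≤ y → y ≤ y₂ → ∃ i, (p i).2 = y) ∧
    (∀ x, x₁ ≤ x → x ≤ x₂ → ∃ j, (q j).1 = x) := by
  have hp (i : Fin n) : manh (p i.succ) (p i.castSucc) ≤ 1 := manh_le_one_of_step (hpstep i)
  have hq (j : Fin m) : manh (q j.succ) (q j.castSucc) ≤ 1 := manh_le_one_of_step (hqstep j)
  refine ⟨?_, fun y hy₁ hy₂ => ?_, fun x hx₁ hx₂ => ?_⟩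
  · obtain ⟨i, j, hij⟩ := Fin.exists_eq_of_crossing hp hq
      (fun i => hq0 ▸ hqm ▸ ⟨(hpin i).1, (hpin i).2.1⟩) (fun j => hp0 ▸ hpn ▸ (hqin j).2.2)
    exact ⟨i, j, hij, hpin i⟩
  · exact Fin.exists_apply_eq_of_le_add_one (f := fun i => (p i).2)
      (fun i => by have := manh_le_one_iff.mp (hp i); omega) (hp0 ▸ hy₁) (hpn ▸ hy₂)
  · exact Fin.exists_apply_eq_of_le_add_one (f := fun j => (q j).1)
      (fun j => by have := manh_le_one_iff.mp (hq j); omega) (hq0 ▸ hx₁) (hqm ▸ hx₂)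

theorem crossing_segments_intersect (x₁ x₂ y₁ y₂ : ℤ) (hx : x₁ ≤ x₂) (hy : y₁ ≤ y₂)
    (n m : ℕ) (p : Fin (n + 1) → ℤ × ℤ) (q : Fin (m + 1) → ℤ × ℤ)
    (hpstep : ∀ i : Fin n, p i.succ = p i.castSucc ∨ manh (p i.succ) (p i.castSucc) = 1)
    (hqstep : ∀ j : Fin m, q j.succ = q j.castSucc ∨ manh (q j.succ) (q j.castSucc) = 1)
    (hp0 : (p 0).2 = y₁) (hpn : (p (Fin.last n)).2 = y₂)
    (hpin : ∀ i, inRect x₁ x₂ y₁ y₂ (p i))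
    (hq0 : (q 0).1 = x₁) (hqm : (q (Fin.last m)).1 = x₂)
    (hqin : ∀ j, inRect x₁ x₂ y₁ y₂ (q j)) :
    (∃ i j, p i = q j ∧ inRect x₁ x₂ y₁ y₂ (p i)) ∧
    (∀ y, y₁ ≤ y → y ≤ y₂ → ∃ i, (p i).2 = y) ∧
    (∀ x, x₁ ≤ x → x ≤ x₂ → ∃ j, (q j).1 = x) :=
  crossing_segments_intersect_general x₁ x₂ y₁ y₂ n m p q hpstep hqstep hp0 hpn hpin hq0 hqm hqin
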